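/- Let h⁽¹⁾ : ℝ^{d₁} × ℝ^{d₂} × ℝ^{d₃} → ℝ^{d₁} be Lipschitz continuous and suppose assumption (B.3.1) holds. Let W⁽²⁾ ⊂ ℝ^{d₂} and W⁽³⁾ ⊂ ℝ^{d₃} be compact sets. Then for every ε > 0 there exist c_ε ≥ 1, r_ε > 0 and T_ε > 0 such that: for every c ≥ c_ε, every x¹ ∈ ℝ^{d₁} with ‖x¹‖ < 1, every (x², x³) ∈ W⁽²⁾ × W⁽³⁾, every t ≥ T_ε, every pair of continuous external inputs x̃² : [0,t] → ℝ^{d₂}, x̃³ : [0,t] → ℝ^{d₃} with ‖x̃²(s) − x²‖ < r_ε and ‖x̃³(s) − x³‖ < r_ε for all s ∈ [0,t], and every differentiable y : [0,t] → ℝ^{d₁} satisfying ẏ(s) = h⁽¹⁾_c(y(s), x̃²(s), x̃³(s)) for all s ∈ [0,t] and y(0) = x¹, one has ‖y(t) − λ⁽¹⁾_∞(x², x³)‖ ≤ 2ε. -/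

import Mathlib

open Filter

noncomputable section

/-- `ℝ^d` with the Euclidean norm. -/
abbrev Euc (d : ℕ) : Type := EuclideanSpace ℝ (Fin d)

/-- `p` is the unique globally asymptotically stable equilibrium of the ODE `ẋ = f x`:
`f p = 0`, `p` is the only zero of `f`, every solution (on `[0,∞)`) converges to `p`,
and solutions starting near `p` stay near `p`. -/
def IsUniqueGase {d : ℕ} (f : Euc d → Euc d) (p : Euc d) : Prop :=
  f p = 0 ∧ (∀ q, f q = 0 → q = p) ∧
  (∀ x : ℝ → Euc d, (∀ t : ℝ, 0 ≤ t → HasDerivAt x (f (x t)) t) →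
    Tendsto x atTop (nhds p)) ∧
  ∀ ε > (0:ℝ), ∃ δ > (0:ℝ), ∀ x : ℝ → Euc d,
    (∀ t : ℝ, 0 ≤ t → HasDerivAt x (f (x t)) t) →
    ‖x 0 - p‖ < δ → ∀ t : ℝ, 0 ≤ t → ‖x t - p‖ ≤ ε

/-!
Every rescaling `h_c` of `h⁽¹⁾` is Lipschitz with the constant of `h⁽¹⁾`, hence so is the limit
`h_∞`, whose ODE therefore has global solutions depending continuously on the initial point.
By stability and global attraction of `λ_∞(x², x³)`, compactness of balls yields a time `T` after
which every limit solution started in a fixed ball stays `δ/4`-close to the equilibrium. A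
solution `y` of the scaled ODE grows at most linearly, so on each window of length `T` starting in
that ball it stays in a compact set, on which `h_c → h_∞` uniformly; with inputs `r`-close to
`(x², x³)` it is then an `η`-approximate solution of the limit ODE and, by Grönwall, shadows the
limit solution through `y` at the start of the window. Marching window by window, `y` comes back
to the `δ`-ball around the equilibrium at every multiple of `T`, and stability keeps it `ε`-close
on the final window. A covering of `W⁽²⁾ × W⁽³⁾` and continuity of `λ_∞` make the constants
uniform, at the cost of a second `ε`.
-/

open Set Metric
open scoped NNReal Topology

theorem IsCompact.eventually_forall_of_forall_eventually_prod {X Y : Type*} [TopologicalSpace Y]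
    {K : Set Y} (hK : IsCompact K) {l : Filter X} {P : X × Y → Prop}
    (hP : ∀ y ∈ K, ∀ᶠ z in l ×ˢ 𝓝 y, P z) : ∀ᶠ x in l, ∀ y ∈ K, P (x, y) :=
  have h : ∀ᶠ z in l ×ˢ 𝓝ˢ K, P z := hK.mem_prod_nhdsSet_of_forall hP
  h.curry.mono fun _ h ↦ h.self_of_nhdsSet

theorem LipschitzWith.of_tendsto {ι α β : Type*} [PseudoMetricSpace α] [PseudoMetricSpace β]
    {l : Filter ι} [l.NeBot] {F : ι → α → β} {f : α → β} {K : ℝ≥0}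
    (hF : ∀ᶠ i in l, LipschitzWith K (F i)) (hlim : ∀ x, Tendsto (F · x) l (𝓝 (f x))) :
    LipschitzWith K f :=
  .of_dist_le_mul fun x y ↦
    le_of_tendsto ((hlim x).dist (hlim y)) (hF.mono fun _ hi ↦ hi.dist_le_mul x y)

theorem LipschitzWith.inv_smul_comp_smul {𝕜 E F : Type*} [NormedField 𝕜] [SeminormedAddCommGroup E]
    [NormedSpace 𝕜 E] [SeminormedAddCommGroup F] [NormedSpace 𝕜 F] {g : E → F} {K : ℝ≥0}
    (hg : LipschitzWith K g) {c : 𝕜} (hc : c ≠ 0) :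
    LipschitzWith K (fun x ↦ c⁻¹ • g (c • x)) := by
  have := (lipschitzWith_smul c⁻¹).comp (hg.comp (lipschitzWith_smul c))
  rwa [nnnorm_inv, mul_comm K, ← mul_assoc, inv_mul_cancel₀ (nnnorm_ne_zero_iff.2 hc),
    one_mul] at this

theorem LipschitzWith.norm_inv_smul_comp_smul_le {E X F : Type*} [SeminormedAddCommGroup E]
    [NormedSpace ℝ E] [SeminormedAddCommGroup X] [NormedSpace ℝ X] [SeminormedAddCommGroup F]
    [NormedSpace ℝ F] {g : E × X → F} {K : ℝ≥0} (hg : LipschitzWith K g) {c : ℝ} (hc : 1 ≤ c)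
    (y : E) (x : X) : ‖c⁻¹ • g (c • (y, x))‖ ≤ ‖g 0‖ + K * (‖y‖ + ‖x‖) := by
  have hG := (hg.inv_smul_comp_smul (by positivity : c ≠ 0)).dist_le_mul (y, x) 0
  have h₀ : ‖c⁻¹ • g (c • (0 : E × X))‖ ≤ ‖g 0‖ := by
    rw [smul_zero, norm_smul, Real.norm_of_nonneg (by positivity)]
    exact mul_le_of_le_one_left (norm_nonneg _) (inv_le_one_of_one_le₀ hc)
  have hyx : ‖(y, x)‖ ≤ ‖y‖ + ‖x‖ :=
    norm_prod_le_iff.2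
      ⟨le_add_of_nonneg_right (norm_nonneg _), le_add_of_nonneg_left (norm_nonneg _)⟩
  rw [dist_eq_norm, dist_zero_right] at hG
  nlinarith [norm_le_norm_add_norm_sub' (c⁻¹ • g (c • (y, x))) (c⁻¹ • g (c • (0 : E × X))),
    K.coe_nonneg]

theorem exists_pos_gronwallBound_lt (K T : ℝ) {θ : ℝ} (hθ : 0 < θ) :
    ∃ η > 0, gronwallBound 0 K η T < θ :=
  (eventually_mem_nhdsWithin.and (((gronwallBound_continuous_ε 0 K T).tendsto' 0 _
    (gronwallBound_ε0_δ0 K T)).mono_left nhdsWithin_le_nhds |>.eventually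
      (gt_mem_nhds hθ))).exists (f := 𝓝[>] 0)

theorem exists_nat_add_one_mul_le_lt {α : Type*} [Field α] [LinearOrder α] [IsStrictOrderedRing α]
    [FloorSemiring α] {t T : α} (hT : 0 < T) (ht : T ≤ t) :
    ∃ n : ℕ, (n + 1) * T ≤ t ∧ t < (n + 2) * T := by
  refine ⟨⌊t / T - 1⌋₊, ?_, ?_⟩
  · have := Nat.floor_le (a := t / T - 1) (by rw [sub_nonneg, le_div_iff₀ hT]; linarith)
    rwa [le_sub_iff_add_le, le_div_iff₀ hT] at this
  · have := Nat.lt_floor_add_one (t / T - 1)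
    rw [sub_lt_iff_lt_add, div_lt_iff₀ hT] at this
    linarith

section IntegralCurves

variable {E : Type*} [NormedAddCommGroup E] [NormedSpace ℝ E]

theorem IsIntegralCurveOn.exists_glue_Icc {v : ℝ → E → E} {γ₁ γ₂ : ℝ → E} {a b c : ℝ}
    (h₁ : IsIntegralCurveOn γ₁ v (Icc a b)) (h₂ : IsIntegralCurveOn γ₂ v (Icc b c))
    (hab : a ≤ b) (hbc : b ≤ c) (hb : γ₁ b = γ₂ b) :
    ∃ γ, EqOn γ γ₁ (Icc a b) ∧ EqOn γ γ₂ (Icc b c) ∧ IsIntegralCurveOn γ v (Icc a c) := by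
  classical
  set γ : ℝ → E := fun t ↦ if t ≤ b then γ₁ t else γ₂ t
  have e₁ : EqOn γ γ₁ (Icc a b) := fun t ht ↦ if_pos ht.2
  have e₂ : EqOn γ γ₂ (Icc b c) := fun t ht ↦ by
    by_cases h : t ≤ b
    · show (if t ≤ b then γ₁ t else γ₂ t) = γ₂ t
      rw [if_pos h, le_antisymm h ht.1, hb]
    · exact if_neg h
  refine ⟨γ, e₁, e₂, fun t _ ↦ ?_⟩
  -- at points off a closed piece, the derivative within that piece holds vacuously
  have d₁ : HasDerivWithinAt γ (v t (γ t)) (Icc a b) t := by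
    by_cases ht : t ∈ Icc a b
    · rw [e₁ ht]; exact (h₁ t ht).congr e₁ (e₁ ht)
    · exact HasFDerivWithinAt.of_notMem_closure (by rwa [isClosed_Icc.closure_eq])
  have d₂ : HasDerivWithinAt γ (v t (γ t)) (Icc b c) t := by
    by_cases ht : t ∈ Icc b c
    · rw [e₂ ht]; exact (h₂ t ht).congr e₂ (e₂ ht)
    · exact HasFDerivWithinAt.of_notMem_closure (by rwa [isClosed_Icc.closure_eq])
  rw [← Icc_union_Icc_eq_Icc hab hbc]
  exact d₁.union d₂

theorem exists_isIntegralCurve_of_exists_isIntegralCurveOn_Icc {v : ℝ → E → E} {K : ℝ≥0}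
    (hv : ∀ t, LipschitzWith K (v t)) {x₀ : E}
    (h : ∀ b, ∃ γ, γ 0 = x₀ ∧ IsIntegralCurveOn γ v (Icc (-b) b)) :
    ∃ γ, γ 0 = x₀ ∧ IsIntegralCurve γ v := by
  choose Γ hΓ₀ hΓ using h
  have hΓ' : ∀ b, ∀ t ∈ Ioo (-b) b, HasDerivAt (Γ b) (v t (Γ b t)) t := fun b t ht ↦
    (hΓ b t (Ioo_subset_Icc_self ht)).hasDerivAt (Icc_mem_nhds ht.1 ht.2)
  have agree : ∀ b b', 0 < b → b ≤ b' → EqOn (Γ b) (Γ b') (Icc (-b) b) := fun b b' hb hbb' ↦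
    ODE_solution_unique_of_mem_Icc (s := fun _ ↦ univ) (fun t _ ↦ (hv t).lipschitzOnWith)
      ⟨neg_neg_iff_pos.2 hb, hb⟩ (hΓ b).continuousOn (hΓ' b) (fun _ _ ↦ mem_univ _)
      ((hΓ b').continuousOn.mono (Icc_subset_Icc (neg_le_neg hbb') hbb'))
      (fun t ht ↦ hΓ' b' t (Ioo_subset_Ioo (neg_le_neg hbb') hbb' ht)) (fun _ _ ↦ mem_univ _)
      (by rw [hΓ₀, hΓ₀])
  refine ⟨fun t ↦ Γ (|t| + 1) t, hΓ₀ _, fun t ↦ ?_⟩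
  have hnear : (fun s ↦ Γ (|s| + 1) s) =ᶠ[𝓝 t] Γ (|t| + 2) := by
    filter_upwards [Ioo_mem_nhds (a := -(|t| + 1)) (b := |t| + 1) (by linarith [neg_abs_le t])
      (by linarith [le_abs_self t])] with s hs
    have : |s| < |t| + 1 := abs_lt.2 hs
    exact agree _ _ (by positivity) (by linarith)
      ⟨by linarith [neg_abs_le s], by linarith [le_abs_self s]⟩
  have hd := hΓ' (|t| + 2) t ⟨by linarith [neg_abs_le t], by linarith [le_abs_self t]⟩
  rw [← hnear.eq_of_nhds] at hd
  exact hd.congr_of_eventuallyEq hnear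

variable [CompleteSpace E] {f : E → E} {K : ℝ≥0}

theorem LipschitzWith.exists_forall_isIntegralCurveOn_Icc (hf : LipschitzWith K f) :
    ∃ τ > 0, ∀ t₀ x₀, ∃ γ : ℝ → E, γ t₀ = x₀ ∧
      IsIntegralCurveOn γ (fun _ ↦ f) (Icc (t₀ - τ) (t₀ + τ)) := by
  refine ⟨(K + 1 : ℝ≥0)⁻¹, by positivity, fun t₀ x₀ ↦ ?_⟩
  -- on the ball of radius `ρ` around `x₀`, `‖f‖ ≤ (K + 1) ρ`, so the time span is `1 / (K + 1)`
  set ρ : ℝ≥0 := ‖f x₀‖₊ + 1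
  have hbound : ∀ x ∈ closedBall x₀ ρ, ‖f x‖ ≤ ((K + 1) * ρ : ℝ≥0) := fun x hx ↦ by
    have h₁ := hf.dist_le_mul x x₀
    have h₂ : ‖f x₀‖ ≤ ρ := by simp [ρ]
    rw [mem_closedBall] at hx
    push_cast
    nlinarith [norm_le_norm_add_norm_sub' (f x) (f x₀), dist_eq_norm (f x) (f x₀), K.coe_nonneg]
  have hpl := IsPicardLindelof.of_time_independent (tmin := t₀ - (K + 1 : ℝ≥0)⁻¹)
    (tmax := t₀ + (K + 1 : ℝ≥0)⁻¹) (t₀ := ⟨t₀, by simp; positivity, by simp; positivity⟩)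
    (r := 0) hbound hf.lipschitzOnWith (by
      simp only [add_sub_cancel_left, sub_sub_cancel, max_self, NNReal.coe_zero, sub_zero]
      push_cast
      field_simp
      rfl)
  exact hpl.exists_eq_forall_mem_Icc_hasDerivWithinAt₀

theorem LipschitzWith.exists_isIntegralCurve (hf : LipschitzWith K f) (x₀ : E) :
    ∃ γ, γ 0 = x₀ ∧ IsIntegralCurve γ (fun _ ↦ f) := by
  obtain ⟨τ, hτ, hloc⟩ := hf.exists_forall_isIntegralCurveOn_Icc
  have grow : ∀ n : ℕ, ∃ γ, γ 0 = x₀ ∧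
      IsIntegralCurveOn γ (fun _ ↦ f) (Icc (-(n * τ)) (n * τ)) := by
    intro n
    induction n with
    | zero =>
      obtain ⟨γ, hγ₀, hγ⟩ := hloc 0 x₀
      exact ⟨γ, hγ₀, hγ.mono (Icc_subset_Icc (by simp [hτ.le]) (by simp [hτ.le]))⟩
    | succ n ih =>
      obtain ⟨γ, hγ₀, hγ⟩ := ih
      have hn : 0 ≤ n * τ := by positivity
      obtain ⟨γr, hγr₀, hγr⟩ := hloc (n * τ) (γ (n * τ))
      obtain ⟨γ₁, e₁, -, hγ₁⟩ := hγ.exists_glue_Icc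
        (hγr.mono (Icc_subset_Icc (by linarith) le_rfl)) (by linarith) (by linarith) hγr₀.symm
      obtain ⟨γl, hγl₀, hγl⟩ := hloc (-(n * τ)) (γ₁ (-(n * τ)))
      obtain ⟨γ₂, -, e₂, hγ₂⟩ := (hγl.mono (Icc_subset_Icc le_rfl (by linarith))).exists_glue_Icc
        hγ₁ (by linarith) (by linarith) hγl₀
      refine ⟨γ₂, ?_, hγ₂.mono (Icc_subset_Icc (by push_cast; linarith) (by push_cast; linarith))⟩
      rw [e₂ ⟨by linarith, by linarith⟩, e₁ ⟨by linarith, hn⟩, hγ₀]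
  refine exists_isIntegralCurve_of_exists_isIntegralCurveOn_Icc (fun _ ↦ hf) fun b ↦ ?_
  obtain ⟨n, hn⟩ := exists_nat_ge (b / τ)
  obtain ⟨γ, hγ₀, hγ⟩ := grow n
  have hb : b ≤ n * τ := (div_le_iff₀ hτ).1 hn
  exact ⟨γ, hγ₀, hγ.mono (Icc_subset_Icc (neg_le_neg hb) hb)⟩

end IntegralCurves

section ApproximateTrajectories

variable {E : Type*} [NormedAddCommGroup E] [NormedSpace ℝ E] {f : E → E} {K : ℝ≥0}
  {y g : ℝ → E} {a b η : ℝ}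

theorem norm_sub_le_of_shadows_attracting_flow {p : E} {t T δ ε θ R₀ : ℝ} (hT : 0 < T)
    (ht : T ≤ t) (hδ : 0 < δ) (hθδ : θ ≤ δ / 2) (hθε : θ ≤ ε / 2) (hR₀ : ‖p‖ + δ ≤ R₀)
    (hy₀ : ‖y 0‖ ≤ R₀)
    (hattract : ∀ x : ℝ → E, IsIntegralCurve x (fun _ ↦ f) → ‖x 0‖ ≤ R₀ → ‖x T - p‖ ≤ δ / 4)
    (hstay : ∀ x : ℝ → E, IsIntegralCurve x (fun _ ↦ f) → ‖x 0 - p‖ < δ →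
      ∀ s, 0 ≤ s → ‖x s - p‖ ≤ ε / 2)
    (hshadow : ∀ a b, 0 ≤ a → a ≤ b → b ≤ t → b - a ≤ T → ‖y a‖ ≤ R₀ →
      ∃ z, z 0 = y a ∧ IsIntegralCurve z (fun _ ↦ f) ∧ dist (y b) (z (b - a)) ≤ θ) :
    ‖y t - p‖ ≤ ε := by
  have bounded : ∀ a, ‖y a - p‖ ≤ δ → ‖y a‖ ≤ R₀ := fun a h ↦
    (norm_le_norm_add_norm_sub' (y a) p).trans (by linarith)
  have step : ∀ a, 0 ≤ a → a + T ≤ t → ‖y a‖ ≤ R₀ → ‖y (a + T) - p‖ ≤ 3 * δ / 4 := by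
    intro a ha hat hya
    obtain ⟨z, hz₀, hz, hdist⟩ := hshadow a (a + T) ha (by linarith) hat (by linarith) hya
    have hzT := hattract z hz (hz₀ ▸ hya)
    rw [add_sub_cancel_left] at hdist
    rw [← dist_eq_norm] at hzT ⊢
    linarith [dist_triangle (y (a + T)) (z T) p]
  have last : ∀ a, 0 ≤ a → a ≤ t → t - a ≤ T → ‖y a - p‖ < δ → ‖y t - p‖ ≤ ε := by
    intro a ha hat hta hya
    obtain ⟨z, hz₀, hz, hdist⟩ := hshadow a t ha hat le_rfl hta (bounded a hya.le)
    have hz := hstay z hz (hz₀ ▸ hya) (t - a) (by linarith)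
    rw [← dist_eq_norm] at hz ⊢
    linarith [dist_triangle (y t) (z (t - a)) p]
  have grid : ∀ n : ℕ, (n + 1) * T ≤ t → ‖y (n * T)‖ ≤ R₀ := by
    intro n
    induction n with
    | zero => intro _; rwa [Nat.cast_zero, zero_mul]
    | succ n ih =>
      intro hn
      push_cast at hn ⊢
      have := step (n * T) (by positivity) (by linarith) (ih (by linarith))
      exact bounded _ (by rw [add_mul, one_mul]; linarith)
  obtain ⟨n, hn₁, hn₂⟩ := exists_nat_add_one_mul_le_lt hT ht
  have := step (n * T) (by positivity) (by linarith) (grid n hn₁)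
  exact last (n * T + T) (by positivity) (by linarith) (by linarith) (by linarith)

variable [CompleteSpace E]

theorem exists_isIntegralCurve_dist_le_gronwallBound (hf : LipschitzWith K f)
    (hy : ∀ s ∈ Icc a b, HasDerivAt y (g s) s) (hg : ∀ s ∈ Icc a b, dist (g s) (f (y s)) ≤ η) :
    ∃ z, z 0 = y a ∧ IsIntegralCurve z (fun _ ↦ f) ∧
      ∀ s ∈ Icc a b, dist (y s) (z (s - a)) ≤ gronwallBound 0 K η (s - a) := by
  obtain ⟨z, hz₀, hz⟩ := hf.exists_isIntegralCurve (y a)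
  have hz' := hz.comp_sub a
  refine ⟨z, hz₀, hz, fun s hs ↦ ?_⟩
  simpa using dist_le_of_approx_trajectories_ODE (v := fun _ ↦ f) (fun _ ↦ hf)
    (fun s hs ↦ (hy s hs).continuousAt.continuousWithinAt)
    (fun s hs ↦ (hy s (Ico_subset_Icc_self hs)).hasDerivWithinAt)
    (fun s hs ↦ hg s (Ico_subset_Icc_self hs)) hz'.continuous.continuousOn
    (fun s _ ↦ (hz' s).hasDerivWithinAt) (fun _ _ ↦ (dist_self _).le)
    (by simp [hz₀] : dist (y a) (z (a - a)) ≤ 0) s hs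

theorem exists_isIntegralCurve_dist_le_of_norm_deriv_le {L : ℝ≥0} {M R T : ℝ}
    (hf : LipschitzWith K f) (hM : 0 ≤ M) (hη : 0 ≤ η) (hab : a ≤ b) (hba : b - a ≤ T)
    (hy : ∀ s ∈ Icc a b, HasDerivAt y (g s) s) (hgrowth : ∀ s ∈ Icc a b, ‖g s‖ ≤ L * ‖y s‖ + M)
    (hg : ∀ s ∈ Icc a b, ‖y s‖ ≤ gronwallBound R L M T → dist (g s) (f (y s)) ≤ η)
    (hya : ‖y a‖ ≤ R) :
    ∃ z, z 0 = y a ∧ IsIntegralCurve z (fun _ ↦ f) ∧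
      dist (y b) (z (b - a)) ≤ gronwallBound 0 K η T := by
  have hbound : ∀ s ∈ Icc a b, ‖y s‖ ≤ gronwallBound R L M T := fun s hs ↦
    (norm_le_gronwallBound_of_norm_deriv_right_le
      (fun s hs ↦ (hy s hs).continuousAt.continuousWithinAt)
      (fun s hs ↦ (hy s (Ico_subset_Icc_self hs)).hasDerivWithinAt) hya
      (fun s hs ↦ hgrowth s (Ico_subset_Icc_self hs)) s hs).trans
    (gronwallBound_mono ((norm_nonneg _).trans hya) hM L.coe_nonneg (by linarith [hs.2]))
  obtain ⟨z, hz₀, hz, hdist⟩ :=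
    exists_isIntegralCurve_dist_le_gronwallBound hf hy fun s hs ↦ hg s hs (hbound s hs)
  exact ⟨z, hz₀, hz, (hdist b ⟨hab, le_rfl⟩).trans
    (gronwallBound_mono le_rfl hη K.coe_nonneg hba)⟩

end ApproximateTrajectories

section Attraction

variable {d : ℕ} {f : Euc d → Euc d} {p : Euc d} {K : ℝ≥0}

theorem IsUniqueGase.exists_uniform_attraction_time (hf : LipschitzWith K f)
    (hp : IsUniqueGase f p) (R : ℝ) {δ : ℝ} (hδ : 0 < δ) :
    ∃ T > 0, ∀ x : ℝ → Euc d, (∀ t, 0 ≤ t → HasDerivAt x (f (x t)) t) → ‖x 0‖ ≤ R →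
      ∀ t ≥ T, ‖x t - p‖ ≤ δ := by
  obtain ⟨-, -, hconv, hstab⟩ := hp
  obtain ⟨δ', hδ', hstay⟩ := hstab δ hδ
  have hloc : ∀ v : Euc d, ∀ᶠ z in atTop ×ˢ 𝓝 v, ∀ x : ℝ → Euc d,
      (∀ t, 0 ≤ t → HasDerivAt x (f (x t)) t) → x 0 = z.2 → ∀ t ≥ z.1, ‖x t - p‖ ≤ δ := by
    intro v
    obtain ⟨X, hX₀, hX⟩ := hf.exists_isIntegralCurve v
    obtain ⟨T, hTp, hT₀⟩ := (((hconv X fun t _ ↦ hX t).eventually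
      (ball_mem_nhds p (half_pos hδ'))).and (eventually_ge_atTop 0)).exists
    -- Grönwall: starting `ρ`-close to `v` keeps `x` within `δ' / 2` of `X` up to time `T`
    set ρ := δ' / 2 * Real.exp (-(K * T))
    filter_upwards [(eventually_ge_atTop T).prod_mk (ball_mem_nhds v (by positivity : 0 < ρ))]
      with ⟨T', w⟩ ⟨hT', hw⟩ x hx hx₀ t ht
    have hxX : dist (x T) (X T) ≤ δ' / 2 := by
      have := dist_le_of_trajectories_ODE (v := fun _ ↦ f) (fun _ ↦ hf) (a := 0) (b := T) (δ := ρ)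
        (fun s hs ↦ (hx s hs.1).continuousAt.continuousWithinAt)
        (fun s hs ↦ (hx s hs.1).hasDerivWithinAt) hX.continuous.continuousOn
        (fun s _ ↦ (hX s).hasDerivWithinAt) (by rw [hx₀, hX₀]; exact (mem_ball.1 hw).le)
        T ⟨hT₀, le_rfl⟩
      rwa [sub_zero, mul_assoc, ← Real.exp_add, neg_add_cancel, Real.exp_zero, mul_one] at this
    have hxT : ‖x (0 + T) - p‖ < δ' := by
      rw [zero_add, ← dist_eq_norm]
      linarith [dist_triangle (x T) (X T) p, mem_ball.1 hTp]
    simpa using hstay (fun s ↦ x (s + T))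
      (fun s hs ↦ (hx (s + T) (by linarith)).comp_add_const s T) hxT (t - T) (by linarith)
  obtain ⟨T, hT, hT₀⟩ := (((isCompact_closedBall (0 : Euc d) R)
    |>.eventually_forall_of_forall_eventually_prod fun v _ ↦ hloc v).and
      (eventually_gt_atTop 0)).exists
  exact ⟨T, hT₀, fun x hx hx₀ ↦ hT (x 0) (mem_closedBall_zero_iff.2 hx₀) x hx rfl⟩

theorem IsUniqueGase.exists_approx_solution_attraction (hf : LipschitzWith K f)
    (hp : IsUniqueGase f p) {ε : ℝ} (hε : 0 < ε) (R : ℝ) (L : ℝ≥0) {M : ℝ} (hM : 0 ≤ M) :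
    ∃ T > 0, ∃ B, ∃ η > 0, ∀ t ≥ T, ∀ y g : ℝ → Euc d,
      (∀ s ∈ Icc 0 t, HasDerivAt y (g s) s) → (∀ s ∈ Icc 0 t, ‖g s‖ ≤ L * ‖y s‖ + M) →
      (∀ s ∈ Icc 0 t, ‖y s‖ ≤ B → dist (g s) (f (y s)) ≤ η) → ‖y 0‖ ≤ R → ‖y t - p‖ ≤ ε := by
  obtain ⟨δ, hδ, hstay⟩ := hp.2.2.2 (ε / 2) (half_pos hε)
  set R₀ := max R (‖p‖ + δ)
  obtain ⟨T, hT, hattract⟩ := hp.exists_uniform_attraction_time hf R₀ (by positivity : 0 < δ / 4)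
  set θ := min (δ / 2) (ε / 2)
  obtain ⟨η, hη, hηθ⟩ := exists_pos_gronwallBound_lt K T (by positivity : 0 < θ)
  refine ⟨T, hT, gronwallBound R₀ L M T, η, hη, fun t ht y g hy hgrowth hforce hy₀ ↦
    norm_sub_le_of_shadows_attracting_flow hT ht hδ (min_le_left _ _) (min_le_right _ _)
      (le_max_right _ _) (hy₀.trans (le_max_left _ _))
      (fun x hx hx₀ ↦ hattract x (fun s _ ↦ hx s) hx₀ T le_rfl)
      (fun x hx ↦ hstay x fun s _ ↦ hx s) fun a b ha hab hbt hba hya ↦ ?_⟩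
  have sub : Icc a b ⊆ Icc 0 t := Icc_subset_Icc ha hbt
  obtain ⟨z, hz₀, hz, hdist⟩ := exists_isIntegralCurve_dist_le_of_norm_deriv_le hf hM hη.le hab
    hba (fun s hs ↦ hy s (sub hs)) (fun s hs ↦ hgrowth s (sub hs))
    (fun s hs ↦ hforce s (sub hs)) hya
  exact ⟨z, hz₀, hz, hdist.trans hηθ.le⟩

end Attraction

section ScaledSystem

variable {d1 d2 d3 : ℕ}

def TracksEquilibrium (h1 : Euc d1 → Euc d2 → Euc d3 → Euc d1) (lam : Euc d1) (ε c₀ r T : ℝ)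
    (x2 : Euc d2) (x3 : Euc d3) : Prop :=
  ∀ c ≥ c₀, ∀ t ≥ T, ∀ (xt2 : ℝ → Euc d2) (xt3 : ℝ → Euc d3),
    (∀ s ∈ Icc (0 : ℝ) t, ‖xt2 s - x2‖ < r ∧ ‖xt3 s - x3‖ < r) →
    ∀ y : ℝ → Euc d1, (∀ s ∈ Icc (0 : ℝ) t,
      HasDerivAt y (c⁻¹ • h1 (c • y s) (c • xt2 s) (c • xt3 s)) s) →
    ‖y 0‖ < 1 → ‖y t - lam‖ ≤ ε

variable {h1 : Euc d1 → Euc d2 → Euc d3 → Euc d1} {lam lam' : Euc d1} {ε ε' c₀ c₀' r r' T T' : ℝ}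
  {x2 x2' : Euc d2} {x3 x3' : Euc d3}

theorem TracksEquilibrium.mono (h : TracksEquilibrium h1 lam ε c₀ r T x2 x3) (hc : c₀ ≤ c₀')
    (hT : T ≤ T') (h2 : ‖x2' - x2‖ + r' ≤ r) (h3 : ‖x3' - x3‖ + r' ≤ r)
    (hε : ε + ‖lam - lam'‖ ≤ ε') : TracksEquilibrium h1 lam' ε' c₀' r' T' x2' x3' := by
  intro c hc' t ht xt2 xt3 hclose y hy hy₀
  have hclose' : ∀ s ∈ Icc (0 : ℝ) t, ‖xt2 s - x2‖ < r ∧ ‖xt3 s - x3‖ < r := fun s hs ↦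
    ⟨by linarith [norm_sub_le_norm_sub_add_norm_sub (xt2 s) x2' x2, (hclose s hs).1],
      by linarith [norm_sub_le_norm_sub_add_norm_sub (xt3 s) x3' x3, (hclose s hs).2]⟩
  have := h c (hc.trans hc') t (hT.trans ht) xt2 xt3 hclose' y hy hy₀
  linarith [norm_sub_le_norm_sub_add_norm_sub (y t) lam lam']

theorem exists_tracksEquilibrium {h1inf : Euc d1 → Euc d2 → Euc d3 → Euc d1} {K : ℝ≥0}
    (hLip : LipschitzWith K (fun p : Euc d1 × Euc d2 × Euc d3 ↦ h1 p.1 p.2.1 p.2.2))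
    (hconv : ∀ K' : Set (Euc d1 × Euc d2 × Euc d3), IsCompact K' →
      TendstoUniformlyOn (fun (c : ℝ) (p : Euc d1 × Euc d2 × Euc d3) ↦
          c⁻¹ • h1 (c • p.1) (c • p.2.1) (c • p.2.2))
        (fun p ↦ h1inf p.1 p.2.1 p.2.2) atTop K')
    (hgase : IsUniqueGase (fun v ↦ h1inf v x2 x3) lam) (hε : 0 < ε) :
    ∃ c₀ r T, 0 < r ∧ TracksEquilibrium h1 lam ε c₀ r T x2 x3 := by
  set F : Euc d1 × Euc d2 × Euc d3 → Euc d1 := fun p ↦ h1 p.1 p.2.1 p.2.2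
  set G : ℝ → Euc d1 × Euc d2 × Euc d3 → Euc d1 := fun c p ↦ c⁻¹ • F (c • p)
  set Finf : Euc d1 × Euc d2 × Euc d3 → Euc d1 := fun p ↦ h1inf p.1 p.2.1 p.2.2
  have hFinf : LipschitzWith K Finf := LipschitzWith.of_tendsto (l := atTop)
    ((eventually_ne_atTop 0).mono fun _ hc ↦ hLip.inv_smul_comp_smul hc)
    fun p ↦ (hconv {p} isCompact_singleton).tendsto_at rfl
  have hf : LipschitzWith K (fun v ↦ h1inf v x2 x3) := by
    have := hFinf.comp (LipschitzWith.prodMk_right (x2, x3))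
    rwa [mul_one] at this
  set M := ‖F 0‖ + K * (‖(x2, x3)‖ + 1)
  obtain ⟨T, -, B, η, hη, htrack⟩ :=
    hgase.exists_approx_solution_attraction hf hε 1 K (by positivity : 0 ≤ M)
  obtain ⟨c₁, hc₁⟩ := eventually_atTop.1 <| Metric.tendstoUniformlyOn_iff.1
    (hconv _ ((isCompact_closedBall (0 : Euc d1) B).prod isCompact_singleton)) (η / 2) (half_pos hη)
  obtain ⟨ρ, hρ, hKρ⟩ := exists_pos_mul_lt (half_pos hη) K
  refine ⟨max c₁ 1, min 1 ρ, T, by positivity, fun c hc t ht xt2 xt3 hclose y hy hy₀ ↦ ?_⟩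
  have hc1 : 1 ≤ c := le_of_max_le_right hc
  have hinput : ∀ s ∈ Icc (0 : ℝ) t, dist (xt2 s, xt3 s) (x2, x3) < min 1 ρ := fun s hs ↦ by
    rw [Prod.dist_eq, dist_eq_norm, dist_eq_norm]; exact max_lt (hclose s hs).1 (hclose s hs).2
  refine htrack t ht y (fun s ↦ G c (y s, xt2 s, xt3 s)) hy (fun s hs ↦ ?_) (fun s hs hyB ↦ ?_)
    hy₀.le
  · have hx : ‖(xt2 s, xt3 s)‖ ≤ ‖(x2, x3)‖ + 1 := by
      have := (hinput s hs).le.trans (min_le_left _ _)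
      rw [dist_eq_norm] at this
      linarith [norm_le_norm_add_norm_sub' (xt2 s, xt3 s) (x2, x3)]
    have := hLip.norm_inv_smul_comp_smul_le hc1 (y s) (xt2 s, xt3 s)
    have : (K : ℝ) * (‖y s‖ + ‖(xt2 s, xt3 s)‖) ≤ K * ‖y s‖ + K * (‖(x2, x3)‖ + 1) := by
      rw [mul_add]; gcongr
    linarith
  · have hinputs : dist (G c (y s, xt2 s, xt3 s)) (G c (y s, x2, x3)) ≤ η / 2 := by
      refine ((hLip.inv_smul_comp_smul (by positivity)).dist_le_mul _ _).trans ?_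
      rw [dist_prod_same_left]
      exact (mul_le_mul_of_nonneg_left ((hinput s hs).le.trans (min_le_right _ _))
        K.coe_nonneg).trans hKρ.le
    have hlimit : dist (G c (y s, x2, x3)) (Finf (y s, x2, x3)) < η / 2 := by
      rw [dist_comm]
      exact hc₁ c (le_of_max_le_left hc) _ ⟨mem_closedBall_zero_iff.2 hyB, rfl⟩
    linarith [dist_triangle (G c (y s, xt2 s, xt3 s)) (G c (y s, x2, x3)) (Finf (y s, x2, x3))]

theorem eventually_tracksEquilibrium {h1inf : Euc d1 → Euc d2 → Euc d3 → Euc d1}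
    {lam : Euc d2 → Euc d3 → Euc d1} {K : ℝ≥0} {x : Euc d2 × Euc d3}
    (hLip : LipschitzWith K (fun p : Euc d1 × Euc d2 × Euc d3 ↦ h1 p.1 p.2.1 p.2.2))
    (hconv : ∀ K' : Set (Euc d1 × Euc d2 × Euc d3), IsCompact K' →
      TendstoUniformlyOn (fun (c : ℝ) (p : Euc d1 × Euc d2 × Euc d3) ↦
          c⁻¹ • h1 (c • p.1) (c • p.2.1) (c • p.2.2))
        (fun p ↦ h1inf p.1 p.2.1 p.2.2) atTop K')
    (hgase : IsUniqueGase (fun v ↦ h1inf v x.1 x.2) (lam x.1 x.2))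
    (hlam : ContinuousAt (fun p : Euc d2 × Euc d3 ↦ lam p.1 p.2) x) (hε : 0 < ε) :
    ∀ᶠ z in (atTop ×ˢ 𝓝[>] 0 ×ˢ atTop) ×ˢ 𝓝 x,
      TracksEquilibrium h1 (lam z.2.1 z.2.2) (2 * ε) z.1.1 z.1.2.1 z.1.2.2 z.2.1 z.2.2 := by
  obtain ⟨c₀, r, T, hr, htrack⟩ := exists_tracksEquilibrium hLip hconv hgase hε
  have hparam : ∀ᶠ q : ℝ × ℝ × ℝ in atTop ×ˢ 𝓝[>] 0 ×ˢ atTop,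
      c₀ ≤ q.1 ∧ q.2.1 < r / 2 ∧ T ≤ q.2.2 :=
    (eventually_ge_atTop c₀).prod_mk
      (((eventually_lt_nhds (half_pos hr)).filter_mono nhdsWithin_le_nhds).prod_mk
        (eventually_ge_atTop T))
  have hbase : ∀ᶠ x' in 𝓝 x, dist x' x < r / 2 ∧ dist (lam x'.1 x'.2) (lam x.1 x.2) < ε :=
    Filter.Eventually.and (ball_mem_nhds _ (half_pos hr)) (hlam (ball_mem_nhds _ hε))
  filter_upwards [hparam.prod_mk hbase] with ⟨⟨c, r', T'⟩, x'⟩ ⟨⟨hc, hr', hT⟩, hx, hlamx⟩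
  rw [Prod.dist_eq, max_lt_iff, dist_eq_norm, dist_eq_norm] at hx
  rw [dist_comm, dist_eq_norm] at hlamx
  exact htrack.mono hc hT (by linarith [hx.1]) (by linarith [hx.2]) (by linarith)

end ScaledSystem

theorem scaled_ode_with_external_inputs_tracks_equilibrium_general
    {d1 d2 d3 : ℕ}
    (h1 : Euc d1 → Euc d2 → Euc d3 → Euc d1)
    -- `h1` is Lipschitz continuous
    (hLip1 : ∃ L : NNReal, LipschitzWith L (fun p : Euc d1 × Euc d2 × Euc d3 => h1 p.1 p.2.1 p.2.2))
    -- (B.3.1)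
    (h1inf : Euc d1 → Euc d2 → Euc d3 → Euc d1)
    (lam1inf : Euc d2 → Euc d3 → Euc d1)
    (hB1conv : ∀ K' : Set (Euc d1 × Euc d2 × Euc d3), IsCompact K' →
      TendstoUniformlyOn
        (fun (c : ℝ) (p : Euc d1 × Euc d2 × Euc d3) =>
          c⁻¹ • h1 (c • p.1) (c • p.2.1) (c • p.2.2))
        (fun p => h1inf p.1 p.2.1 p.2.2) atTop K')
    (hB1 : ∀ y z, IsUniqueGase (fun v => h1inf v y z) (lam1inf y z))
    (hlam1infLip : ∃ L : NNReal, LipschitzWith L (fun p : Euc d2 × Euc d3 => lam1inf p.1 p.2))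
    -- compact sets of external-input base points
    (W2 : Set (Euc d2)) (W3 : Set (Euc d3)) (hW2 : IsCompact W2) (hW3 : IsCompact W3) :
    ∀ ε > (0:ℝ), ∃ cε ≥ (1:ℝ), ∃ rε > (0:ℝ), ∃ Tε > (0:ℝ),
      ∀ c ≥ cε, ∀ x1 : Euc d1, ‖x1‖ < 1 → ∀ x2 ∈ W2, ∀ x3 ∈ W3, ∀ t ≥ Tε,
        ∀ (xt2 : ℝ → Euc d2) (xt3 : ℝ → Euc d3),
          ContinuousOn xt2 (Set.Icc 0 t) → ContinuousOn xt3 (Set.Icc 0 t) →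
          (∀ s ∈ Set.Icc (0:ℝ) t, ‖xt2 s - x2‖ < rε ∧ ‖xt3 s - x3‖ < rε) →
          ∀ y : ℝ → Euc d1,
            (∀ s ∈ Set.Icc (0:ℝ) t,
              HasDerivAt y (c⁻¹ • h1 (c • y s) (c • xt2 s) (c • xt3 s)) s) →
            y 0 = x1 →
            ‖y t - lam1inf x2 x3‖ ≤ 2 * ε := by
  intro ε hε
  obtain ⟨K, hK⟩ := hLip1
  obtain ⟨Kl, hKl⟩ := hlam1infLip
  have hpos : ∀ᶠ q : ℝ × ℝ × ℝ in atTop ×ˢ 𝓝[>] 0 ×ˢ atTop, 1 ≤ q.1 ∧ 0 < q.2.1 ∧ 0 < q.2.2 :=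
    (eventually_ge_atTop 1).prod_mk ((eventually_mem_nhdsWithin (s := Ioi 0)).prod_mk
      (eventually_gt_atTop 0))
  obtain ⟨⟨c₀, r, T⟩, ⟨hc₀, hr, hT⟩, htrack⟩ :=
    (hpos.and ((hW2.prod hW3).eventually_forall_of_forall_eventually_prod fun x _ ↦
      eventually_tracksEquilibrium hK hB1conv (hB1 x.1 x.2) hKl.continuous.continuousAt hε)).exists
  exact ⟨c₀, hc₀, r, hr, T, hT, fun c hc x1 hx1 x2 hx2 x3 hx3 t ht xt2 xt3 _ _ hclose y hy hy₀ ↦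
    htrack (x2, x3) ⟨hx2, hx3⟩ c hc t ht xt2 xt3 hclose y hy (hy₀ ▸ hx1)⟩

theorem scaled_ode_with_external_inputs_tracks_equilibrium
    {d1 d2 d3 : ℕ}
    (h1 : Euc d1 → Euc d2 → Euc d3 → Euc d1)
    -- `h1` is Lipschitz continuous
    (hLip1 : ∃ L : NNReal, LipschitzWith L (fun p : Euc d1 × Euc d2 × Euc d3 => h1 p.1 p.2.1 p.2.2))
    -- (B.3.1)
    (h1inf : Euc d1 → Euc d2 → Euc d3 → Euc d1)
    (lam1inf : Euc d2 → Euc d3 → Euc d1)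
    (hB1conv : ∀ K' : Set (Euc d1 × Euc d2 × Euc d3), IsCompact K' →
      TendstoUniformlyOn
        (fun (c : ℝ) (p : Euc d1 × Euc d2 × Euc d3) =>
          c⁻¹ • h1 (c • p.1) (c • p.2.1) (c • p.2.2))
        (fun p => h1inf p.1 p.2.1 p.2.2) atTop K')
    (hB1 : ∀ y z, IsUniqueGase (fun v => h1inf v y z) (lam1inf y z))
    (hlam1infLip : ∃ L : NNReal, LipschitzWith L (fun p : Euc d2 × Euc d3 => lam1inf p.1 p.2))
    (hlam1inf0 : lam1inf 0 0 = 0)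
    -- compact sets of external-input base points
    (W2 : Set (Euc d2)) (W3 : Set (Euc d3)) (hW2 : IsCompact W2) (hW3 : IsCompact W3) :
    ∀ ε > (0:ℝ), ∃ cε ≥ (1:ℝ), ∃ rε > (0:ℝ), ∃ Tε > (0:ℝ),
      ∀ c ≥ cε, ∀ x1 : Euc d1, ‖x1‖ < 1 → ∀ x2 ∈ W2, ∀ x3 ∈ W3, ∀ t ≥ Tε,
        ∀ (xt2 : ℝ → Euc d2) (xt3 : ℝ → Euc d3),
          ContinuousOn xt2 (Set.Icc 0 t) → ContinuousOn xt3 (Set.Icc 0 t) →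
          (∀ s ∈ Set.Icc (0:ℝ) t, ‖xt2 s - x2‖ < rε ∧ ‖xt3 s - x3‖ < rε) →
          ∀ y : ℝ → Euc d1,
            (∀ s ∈ Set.Icc (0:ℝ) t,
              HasDerivAt y (c⁻¹ • h1 (c • y s) (c • xt2 s) (c • xt3 s)) s) →
            y 0 = x1 →
            ‖y t - lam1inf x2 x3‖ ≤ 2 * ε :=
  scaled_ode_with_external_inputs_tracks_equilibrium_general h1 hLip1 h1inf lam1inf hB1conv hB1
    hlam1infLip W2 W3 hW2 hW3
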